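/- Let A be a nonsingular M-tensor and suppose {x ≥ 0 : A x^{m-1} ≤ b} is nonempty, with maximal nonnegative solution x_max(A,b). If b̃ ≥ b and Ã ≤ A entrywise with Ã still a nonsingular M-tensor, then Ã x^{m-1} = b̃ has a maximal nonnegative solution x_max(Ã,b̃), and x_max(Ã,b̃) ≥ x_max(A,b). -/

import Mathlib

/-!
The set `F` of `x ≥ 0` with `Ã x^{m-1} ≤ b̃` contains `x_max(A, b)`, since
`Ã x^{m-1} ≤ A x^{m-1} = b ≤ b̃` for `x ≥ 0`. As `Ã` is a Z-tensor, raising the coordinates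
other than `i` can only lower row `i`, so `F` is closed under coordinatewise maxima; and as
`Ã = s I - B` with `ρ(B) < s`, no nonzero `y ≥ 0` has `Ã y^{m-1} ≤ 0`, which by homogeneity and
compactness of the simplex bounds `F`. So the coordinatewise supremum of `F` lies in `F`, and it
is a solution, because at a row with strict inequality its coordinate could still be raised.

The spectral input: if `s y^p ≤ B y^p` for some nonzero `y ≥ 0`, the positive tensors `B + ε` have
positive eigenvectors whose eigenvalues are `≥ s` by a Collatz–Wielandt comparison with `y`, and
letting `ε → 0` gives an eigenvalue of `B` that is `≥ s`.
-/

open Finset Filter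

noncomputable section

/-- Action of an order-(p+1) tensor (p trailing indices):
`(A x^{p})_i = ∑ a_{i i₂ … i_{p+1}} x_{i₂} ⋯ x_{i_{p+1}}`. -/
def tapp (p n : ℕ) (A : Fin n → (Fin p → Fin n) → ℝ) (x : Fin n → ℝ) : Fin n → ℝ :=
  fun i => ∑ js : Fin p → Fin n, A i js * ∏ j, x (js j)

/-- A `Z`-tensor: all off-diagonal entries are nonpositive. -/
def IsZTensor (p n : ℕ) (A : Fin n → (Fin p → Fin n) → ℝ) : Prop :=
  ∀ i js, (∃ j, js j ≠ i) → A i js ≤ 0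

/-- The identity tensor. -/
def identT (p n : ℕ) : Fin n → (Fin p → Fin n) → ℝ :=
  fun i js => if ∀ j, js j = i then 1 else 0

/-- Spectral radius of a tensor: sup of moduli of (real) eigenvalues. -/
def tensorSpecRad (p n : ℕ) (B : Fin n → (Fin p → Fin n) → ℝ) : ℝ :=
  sSup {r : ℝ | ∃ lam : ℝ, ∃ x : Fin n → ℝ, x ≠ 0 ∧
    (∀ i, tapp p n B x i = lam * x i ^ p) ∧ r = |lam|}

/-- A nonsingular M-tensor: `A = s I − B` with `B ≥ 0` and `s > ρ(B)`. -/
def IsMTensor (p n : ℕ) (A : Fin n → (Fin p → Fin n) → ℝ) : Prop :=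
  ∃ s : ℝ, ∃ B : Fin n → (Fin p → Fin n) → ℝ,
    (∀ i js, 0 ≤ B i js) ∧ tensorSpecRad p n B < s ∧
    ∀ i js, A i js = s * identT p n i js - B i js

/-- The diagonal-part tensor of `A`. -/
def diagT (p n : ℕ) (A : Fin n → (Fin p → Fin n) → ℝ) : Fin n → (Fin p → Fin n) → ℝ :=
  fun i js => if ∀ j, js j = i then A i (fun _ => i) else 0

/-- The majorization matrix of `A`: `M_{ij} = a_{i j … j}`. -/
def majMatrix (p n : ℕ) (A : Fin n → (Fin p → Fin n) → ℝ) : Matrix (Fin n) (Fin n) ℝ :=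
  fun i j => A i (fun _ => j)

/-- The "mixed index" part `N = M_tensor − A`: zero on constant trailing tuples,
`−A` elsewhere. -/
def NPart (p n : ℕ) (A : Fin n → (Fin p → Fin n) → ℝ) : Fin n → (Fin p → Fin n) → ℝ :=
  fun i js => if ∀ j' j'', js j' = js j'' then 0 else -A i js

/-- A nonsingular M-matrix: a Z-matrix with `M y > 0` for some `y > 0`. -/
def IsMMatrix (n : ℕ) (P : Matrix (Fin n) (Fin n) ℝ) : Prop :=
  (∀ i j, i ≠ j → P i j ≤ 0) ∧ ∃ y : Fin n → ℝ, (∀ i, 0 < y i) ∧ ∀ i, 0 < P.mulVec y i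

/-- Spectral radius of a real matrix (via its complex spectrum). -/
def matSpecRad (n : ℕ) (J : Matrix (Fin n) (Fin n) ℝ) : ℝ :=
  sSup {r : ℝ | ∃ μ ∈ spectrum ℂ (J.map (Complex.ofReal ·)), r = ‖μ‖}

/-- Irreducibility of a matrix. -/
def MatIrreducible (n : ℕ) (J : Matrix (Fin n) (Fin n) ℝ) : Prop :=
  ∀ S : Finset (Fin n), S.Nonempty → S ≠ Finset.univ → ∃ i ∈ S, ∃ j, j ∉ S ∧ J i j ≠ 0

open Topology

section Simplex

variable {ι : Type*} [Fintype ι]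

lemma exists_pos_of_mem_stdSimplex {x : ι → ℝ} (hx : x ∈ stdSimplex ℝ ι) : ∃ i, 0 < x i := by
  by_contra! h
  simpa [le_antisymm (h _) (hx.1 _)] using hx.2

lemma inv_sum_smul_mem_stdSimplex {x : ι → ℝ} (hx : 0 ≤ x) (hx0 : x ≠ 0) :
    (∑ i, x i)⁻¹ • x ∈ stdSimplex ℝ ι := by
  obtain ⟨k, hk⟩ := Function.ne_iff.mp hx0
  have hsum : 0 < ∑ i, x i := sum_pos' (fun i _ => hx i) ⟨k, mem_univ k, (hx k).lt_of_ne' hk⟩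
  refine ⟨fun i => smul_nonneg (inv_nonneg.mpr hsum.le) (hx i), ?_⟩
  simp [← mul_sum, hsum.ne']

end Simplex

lemma SupClosed.csSup_mem_of_isClosed {α : Type*} [ConditionallyCompleteLattice α]
    [TopologicalSpace α] [SupConvergenceClass α] {s : Set α} (hsup : SupClosed s)
    (hc : IsClosed s) (hne : s.Nonempty) (hbdd : BddAbove s) : sSup s ∈ s := by
  have : Nonempty s := hne.to_subtype
  have : IsDirectedOrder s := ⟨fun a b => ⟨⟨a ⊔ b, hsup a.2 b.2⟩, le_sup_left, le_sup_right⟩⟩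
  exact hc.mem_of_tendsto (SupConvergenceClass.tendsto_coe_atTop_isLUB _ _ (isLUB_csSup hne hbdd))
    (Eventually.of_forall Subtype.prop)

section Tapp

variable {p n : ℕ}

lemma tapp_smul (B : Fin n → (Fin p → Fin n) → ℝ) (c : ℝ) (x : Fin n → ℝ) :
    tapp p n B (c • x) = c ^ p • tapp p n B x := by
  ext i
  simp only [tapp, Pi.smul_apply, smul_eq_mul, prod_mul_distrib, prod_const, card_univ,
    Fintype.card_fin, mul_sum]
  exact sum_congr rfl fun _ _ => by ring

lemma tapp_mono {B : Fin n → (Fin p → Fin n) → ℝ} (hB : 0 ≤ B) {x y : Fin n → ℝ}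
    (hx : 0 ≤ x) (hxy : x ≤ y) : tapp p n B x ≤ tapp p n B y := fun i =>
  sum_le_sum fun js _ => mul_le_mul_of_nonneg_left
    (prod_le_prod (fun _ _ => hx _) fun _ _ => hxy _) (hB i js)

lemma tapp_mono_left {B C : Fin n → (Fin p → Fin n) → ℝ} (hBC : B ≤ C) {x : Fin n → ℝ}
    (hx : 0 ≤ x) : tapp p n B x ≤ tapp p n C x := fun i =>
  sum_le_sum fun js _ => mul_le_mul_of_nonneg_right (hBC i js) (prod_nonneg fun _ _ => hx _)

lemma tapp_identT (x : Fin n → ℝ) : tapp p n (identT p n) x = x ^ p := by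
  ext i
  rw [tapp, sum_eq_single (fun _ => i)]
  · simp [identT]
  · intro js _ hjs
    rw [identT, if_neg fun h => hjs (funext h), zero_mul]
  · simp

lemma tapp_eq_smul_pow_sub {A B : Fin n → (Fin p → Fin n) → ℝ} {s : ℝ}
    (hA : ∀ i js, A i js = s * identT p n i js - B i js) (x : Fin n → ℝ) :
    tapp p n A x = s • x ^ p - tapp p n B x := by
  rw [← tapp_identT]
  ext i
  simp only [tapp, hA, Pi.sub_apply, Pi.smul_apply, smul_eq_mul, mul_sum, ← sum_sub_distrib]
  exact sum_congr rfl fun _ _ => by ring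

lemma tapp_add_const (B : Fin n → (Fin p → Fin n) → ℝ) (ε : ℝ) (x : Fin n → ℝ) (i : Fin n) :
    tapp p n (fun i js => B i js + ε) x i = tapp p n B x i + ε * (∑ k, x k) ^ p := by
  rw [sum_pow', Fintype.piFinset_univ]
  simp only [tapp, mul_sum, ← sum_add_distrib]
  exact sum_congr rfl fun _ _ => by ring

@[fun_prop]
lemma continuous_tapp (B : Fin n → (Fin p → Fin n) → ℝ) : Continuous (tapp p n B) :=
  continuous_pi fun _ => by unfold tapp; fun_prop

lemma tapp_pos {C : Fin n → (Fin p → Fin n) → ℝ} (hC : ∀ i js, 0 < C i js) {x : Fin n → ℝ}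
    (hx : 0 ≤ x) {k : Fin n} (hk : 0 < x k) (i : Fin n) : 0 < tapp p n C x i :=
  sum_pos' (fun js _ => mul_nonneg (hC i js).le (prod_nonneg fun _ _ => hx _))
    ⟨fun _ => k, mem_univ _, mul_pos (hC i _) (prod_pos fun _ _ => hk)⟩

lemma tapp_lt_tapp {C : Fin n → (Fin p → Fin n) → ℝ} (hp : p ≠ 0) (hC : ∀ i js, 0 < C i js)
    {x y : Fin n → ℝ} (hx : 0 ≤ x) (hxy : x ≤ y) {k : Fin n} (hk : x k < y k) (i : Fin n) :
    tapp p n C x i < tapp p n C y i := by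
  refine sum_lt_sum (fun js _ => mul_le_mul_of_nonneg_left
    (prod_le_prod (fun _ _ => hx _) fun _ _ => hxy _) (hC i js).le)
    ⟨fun _ => k, mem_univ _, mul_lt_mul_of_pos_left ?_ (hC i _)⟩
  simpa using pow_lt_pow_left₀ hk (hx k) hp

end Tapp

section Perron

variable {p n : ℕ} {C : Fin n → (Fin p → Fin n) → ℝ}

lemma pos_of_tapp_le (hp : p ≠ 0) (hC : ∀ i js, 0 < C i js) {lam : ℝ} {x : Fin n → ℝ}
    (hx : x ∈ stdSimplex ℝ (Fin n)) (hle : ∀ i, tapp p n C x i ≤ lam * x i ^ p) (i : Fin n) :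
    0 < x i := by
  obtain ⟨k, hk⟩ := exists_pos_of_mem_stdSimplex hx
  refine (hx.1 i).lt_of_ne' fun h => ?_
  simpa [h, zero_pow hp] using (tapp_pos hC hx.1 hk i).trans_le (hle i)

lemma exists_tapp_lt_of_tapp_le (hp : p ≠ 0) (hC : ∀ i js, 0 < C i js) {lam : ℝ}
    {x : Fin n → ℝ} (hx : ∀ i, 0 < x i) (hle : ∀ i, tapp p n C x i ≤ lam * x i ^ p) {j : Fin n}
    (hj : tapp p n C x j < lam * x j ^ p) :
    ∃ y : Fin n → ℝ, (∀ i, 0 < y i) ∧ ∀ i, tapp p n C y i < lam * y i ^ p := by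
  set y : ℝ → Fin n → ℝ := fun δ => Function.update x j (x j - δ)
  have hj' : ∀ᶠ δ in 𝓝 0, tapp p n C (y δ) j < lam * y δ j ^ p := by
    refine ContinuousAt.eventually_lt (by fun_prop) (by fun_prop) ?_
    simpa [y] using hj
  obtain ⟨δ, hδj, hδ, hδx⟩ :=
    ((hj'.filter_mono nhdsWithin_le_nhds).and (Ioo_mem_nhdsGT (hx j))).exists
  have hpos : ∀ i, 0 < y δ i := fun i => by
    rcases eq_or_ne i j with rfl | hi <;> simp [y, *]
  have hyx : y δ ≤ x := fun i => by
    rcases eq_or_ne i j with rfl | hi <;> simp [y, *, hδ.le]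
  refine ⟨y δ, hpos, fun i => ?_⟩
  rcases eq_or_ne i j with rfl | hi
  · exact hδj
  · calc tapp p n C (y δ) i < tapp p n C x i :=
          tapp_lt_tapp hp hC (fun k => (hpos k).le) hyx (k := j) (by simp [y, hδ]) i
      _ ≤ lam * y δ i ^ p := by simpa [y, hi] using hle i

lemma exists_lt_tapp_le_of_tapp_lt {lam : ℝ} {y : Fin n → ℝ}
    (hlt : ∀ i, tapp p n C y i < lam * y i ^ p) :
    ∃ lam' < lam, ∀ i, tapp p n C y i ≤ lam' * y i ^ p := by
  have hev : ∀ᶠ μ in 𝓝 lam, ∀ i, tapp p n C y i < μ * y i ^ p :=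
    eventually_all.mpr fun i => ContinuousAt.eventually_lt (by fun_prop) (by fun_prop) (hlt i)
  obtain ⟨μ, hμ, hμlt⟩ := ((hev.filter_mono nhdsWithin_le_nhds).and self_mem_nhdsWithin).exists
    (f := 𝓝[<] lam)
  exact ⟨μ, hμlt, fun i => (hμ i).le⟩

lemma exists_tapp_le_mul_pow {x : Fin n → ℝ} (hx : ∀ i, 0 < x i) :
    ∃ c ≥ 0, ∀ i, tapp p n C x i ≤ c * x i ^ p := by
  refine ⟨∑ i, |tapp p n C x i| / x i ^ p,
    sum_nonneg fun i _ => div_nonneg (abs_nonneg _) (pow_pos (hx i) p).le, fun i => ?_⟩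
  calc tapp p n C x i ≤ |tapp p n C x i| / x i ^ p * x i ^ p := by
        rw [div_mul_cancel₀ _ (pow_pos (hx i) p).ne']; exact le_abs_self _
    _ ≤ _ := mul_le_mul_of_nonneg_right (single_le_sum (f := fun i => |tapp p n C x i| / x i ^ p)
        (fun k _ => div_nonneg (abs_nonneg _) (pow_pos (hx k) p).le) (mem_univ i))
        (pow_pos (hx i) p).le

lemma tapp_smul_le_mul_pow {lam : ℝ} {y : Fin n → ℝ} (hy : ∀ i, tapp p n C y i ≤ lam * y i ^ p)
    {c : ℝ} (hc : 0 ≤ c) (i : Fin n) : tapp p n C (c • y) i ≤ lam * (c • y) i ^ p := by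
  rw [tapp_smul, Pi.smul_apply, Pi.smul_apply, smul_eq_mul, smul_eq_mul, mul_pow, mul_left_comm]
  exact mul_le_mul_of_nonneg_left (hy i) (pow_nonneg hc p)

/-- Among the pairs with `C x^p ≤ λ x^p` and `x` in the simplex, one with least `λ` is an
eigenpair: otherwise `exists_tapp_lt_of_tapp_le` and `exists_lt_tapp_le_of_tapp_lt` produce such
a pair with a smaller `λ`. -/
lemma exists_pos_eigenvector (hp : p ≠ 0) (hn : n ≠ 0) (hC : ∀ i js, 0 < C i js) :
    ∃ lam : ℝ, ∃ x ∈ stdSimplex ℝ (Fin n), (∀ i, 0 < x i) ∧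
      ∀ i, tapp p n C x i = lam * x i ^ p := by
  have : Nonempty (Fin n) := ⟨⟨0, by omega⟩⟩
  set x₀ : Fin n → ℝ := (∑ _ : Fin n, (1 : ℝ))⁻¹ • 1
  have hx₀ : x₀ ∈ stdSimplex ℝ (Fin n) :=
    inv_sum_smul_mem_stdSimplex zero_le_one (by simp [Function.ne_iff])
  obtain ⟨c, hc, hx₀c⟩ := exists_tapp_le_mul_pow (C := C) (x := x₀) fun i => by simp [x₀]; omega
  set S : Set (ℝ × (Fin n → ℝ)) := (Set.Icc 0 c ×ˢ stdSimplex ℝ (Fin n)) ∩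
    {q | ∀ i, tapp p n C q.2 i ≤ q.1 * q.2 i ^ p}
  have hS : IsCompact S := (isCompact_Icc.prod (isCompact_stdSimplex ℝ (Fin n))).inter_right <|
    Set.ofPred_forall (fun i (q : ℝ × (Fin n → ℝ)) => tapp p n C q.2 i ≤ q.1 * q.2 i ^ p) ▸
      isClosed_iInter fun i => isClosed_le (by fun_prop) (by fun_prop)
  obtain ⟨q, hqS, hmin⟩ := hS.exists_isMinOn ⟨(c, x₀), ⟨⟨hc, le_rfl⟩, hx₀⟩, hx₀c⟩
    continuous_fst.continuousOn
  have hq := pos_of_tapp_le hp hC hqS.1.2 hqS.2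
  refine ⟨q.1, q.2, hqS.1.2, hq, fun i => ?_⟩
  by_contra hne
  obtain ⟨y, hy, hlt⟩ := exists_tapp_lt_of_tapp_le hp hC hq hqS.2 ((hqS.2 i).lt_of_ne hne)
  obtain ⟨μ, hμ, hμle⟩ := exists_lt_tapp_le_of_tapp_lt hlt
  have hμ₀ : 0 < μ := pos_of_mul_pos_left
    ((tapp_pos hC (fun k => (hy k).le) (hy i) i).trans_le (hμle i)) (pow_nonneg (hy i).le p)
  have hyS : (μ, (∑ k, y k)⁻¹ • y) ∈ S :=
    ⟨⟨⟨hμ₀.le, hμ.le.trans hqS.1.1.2⟩, inv_sum_smul_mem_stdSimplex (fun k => (hy k).le)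
      (Function.ne_iff.mpr ⟨i, (hy i).ne'⟩)⟩,
      tapp_smul_le_mul_pow hμle (inv_nonneg.mpr (sum_nonneg fun k _ => (hy k).le))⟩
  exact (isMinOn_iff.mp hmin _ hyS).not_gt hμ

end Perron

section Spectral

variable {p n : ℕ} {B : Fin n → (Fin p → Fin n) → ℝ}

lemma abs_le_sum_of_eigen (hB : 0 ≤ B) {lam : ℝ} {x : Fin n → ℝ} (hx : x ≠ 0)
    (heig : ∀ i, tapp p n B x i = lam * x i ^ p) : |lam| ≤ ∑ i, ∑ js, B i js := by
  obtain ⟨k, hk⟩ := Function.ne_iff.mp hx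
  obtain ⟨i, -, hi⟩ := exists_max_image univ (fun k => |x k|) ⟨k, mem_univ k⟩
  have hxi : 0 < |x i| ^ p := pow_pos ((abs_pos.mpr hk).trans_le (hi k (mem_univ k))) p
  have hrow : |lam| * |x i| ^ p ≤ (∑ js, B i js) * |x i| ^ p :=
    calc |lam| * |x i| ^ p = |∑ js, B i js * ∏ j, x (js j)| := by
          rw [← abs_pow, ← abs_mul, ← heig, tapp]
      _ ≤ ∑ js, B i js * |x i| ^ p := by
          refine (abs_sum_le_sum_abs _ _).trans (sum_le_sum fun js _ => ?_)
          rw [abs_mul, abs_of_nonneg (hB i js), abs_prod]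
          refine mul_le_mul_of_nonneg_left ?_ (hB i js)
          simpa using prod_le_prod (s := univ) (fun _ _ => abs_nonneg _)
            fun j _ => hi (js j) (mem_univ _)
      _ = (∑ js, B i js) * |x i| ^ p := by rw [sum_mul]
  exact (le_of_mul_le_mul_right hrow hxi).trans <| single_le_sum
    (f := fun k => ∑ js, B k js) (fun k _ => sum_nonneg fun js _ => hB k js) (mem_univ i)

lemma abs_le_tensorSpecRad (hB : 0 ≤ B) {lam : ℝ} {x : Fin n → ℝ} (hx : x ≠ 0)
    (heig : ∀ i, tapp p n B x i = lam * x i ^ p) : |lam| ≤ tensorSpecRad p n B :=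
  le_csSup ⟨_, by rintro _ ⟨μ, y, hy, hμ, rfl⟩; exact abs_le_sum_of_eigen hB hy hμ⟩
    ⟨lam, x, hx, heig, rfl⟩

lemma le_eigenvalue_of_le_tapp {C : Fin n → (Fin p → Fin n) → ℝ} (hB : 0 ≤ B) (hBC : B ≤ C)
    {s : ℝ} {y : Fin n → ℝ} (hy : 0 ≤ y) (hy0 : y ≠ 0) (hsub : ∀ i, s * y i ^ p ≤ tapp p n B y i)
    {lam : ℝ} {x : Fin n → ℝ} (hx : ∀ i, 0 < x i)
    (heig : ∀ i, tapp p n C x i = lam * x i ^ p) : s ≤ lam := by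
  obtain ⟨k, hk⟩ := Function.ne_iff.mp hy0
  obtain ⟨j, -, hj⟩ := exists_max_image univ (fun i => y i / x i) ⟨k, mem_univ k⟩
  set t := y j / x j
  have hyt : y ≤ t • x := fun i => by
    simpa [div_le_iff₀ (hx i)] using hj i (mem_univ i)
  have hyj : 0 < y j := by
    have := (div_pos ((hy k).lt_of_ne' hk) (hx k)).trans_le (hj k (mem_univ k))
    exact (div_pos_iff_of_pos_right (hx j)).mp this
  have htx : t * x j = y j := div_mul_cancel₀ _ (hx j).ne'
  refine le_of_mul_le_mul_right ?_ (pow_pos hyj p)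
  calc s * y j ^ p ≤ tapp p n B y j := hsub j
    _ ≤ tapp p n C (t • x) j := (tapp_mono hB hy hyt j).trans (tapp_mono_left hBC (hy.trans hyt) j)
    _ = lam * y j ^ p := by rw [tapp_smul, Pi.smul_apply, heig, ← htx]; ring

lemma exists_approx_eigen_ge (hp : p ≠ 0) (hB : 0 ≤ B) {s : ℝ} {y : Fin n → ℝ} (hy : 0 ≤ y)
    (hy0 : y ≠ 0) (hsub : ∀ i, s * y i ^ p ≤ tapp p n B y i) {ε : ℝ} (hε : 0 < ε)
    (hε₁ : ε ≤ 1) : ∃ lam ∈ Set.Icc s (∑ i, ∑ js, (B i js + 1)), ∃ x ∈ stdSimplex ℝ (Fin n),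
      ∀ i, tapp p n B x i = lam * x i ^ p - ε := by
  have hn : n ≠ 0 := by rintro rfl; exact hy0 (Subsingleton.elim _ _)
  have hBε : ∀ i js, 0 < B i js + ε := fun i js => add_pos_of_nonneg_of_pos (hB i js) hε
  obtain ⟨lam, x, hxΔ, hx, heig⟩ := exists_pos_eigenvector hp hn hBε
  refine ⟨lam, ⟨?_, ?_⟩, x, hxΔ, fun i => ?_⟩
  · exact le_eigenvalue_of_le_tapp hB (fun i js => le_add_of_nonneg_right hε.le) hy hy0 hsub
      hx heig
  · have hx0 : x ≠ 0 := fun h => by simpa [h] using hxΔ.2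
    refine (le_abs_self lam).trans <|
      (abs_le_sum_of_eigen (fun i js => (hBε i js).le) hx0 heig).trans ?_
    exact sum_le_sum fun i _ => sum_le_sum fun js _ => add_le_add_right hε₁ _
  · have := heig i
    rw [tapp_add_const, hxΔ.2, one_pow, mul_one] at this
    linarith

/-- The limit `ε → 0` in `exists_approx_eigen_ge` is taken by minimising the residual of the
eigen-equation over the compact set of candidate pairs. -/
lemma le_tensorSpecRad_of_le_tapp (hp : p ≠ 0) (hB : 0 ≤ B) {s : ℝ} {y : Fin n → ℝ}
    (hy : 0 ≤ y) (hy0 : y ≠ 0) (hsub : ∀ i, s * y i ^ p ≤ tapp p n B y i) :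
    s ≤ tensorSpecRad p n B := by
  set K := Set.Icc s (∑ i, ∑ js, (B i js + 1)) ×ˢ stdSimplex ℝ (Fin n)
  set res : ℝ × (Fin n → ℝ) → ℝ := fun q => ‖tapp p n B q.2 - q.1 • q.2 ^ p‖
  have happrox : ∀ ε, 0 < ε → ε ≤ 1 → ∃ q ∈ K, res q ≤ ε := by
    intro ε hε hε₁
    obtain ⟨lam, hlam, x, hx, heig⟩ := exists_approx_eigen_ge hp hB hy hy0 hsub hε hε₁
    refine ⟨(lam, x), ⟨hlam, hx⟩, (pi_norm_le_iff_of_nonneg hε.le).mpr fun i => ?_⟩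
    simp [heig, abs_of_pos hε]
  obtain ⟨q₁, hq₁K, -⟩ := happrox 1 one_pos le_rfl
  obtain ⟨q, hqK, hmin⟩ := (isCompact_Icc.prod (isCompact_stdSimplex ℝ (Fin n))).exists_isMinOn
    ⟨q₁, hq₁K⟩ (Continuous.continuousOn (by fun_prop) : ContinuousOn res K)
  have hres : res q = 0 := by
    refine le_antisymm (le_of_forall_pos_le_add fun ε hε => ?_) (norm_nonneg _)
    obtain ⟨q', hq'K, hq'⟩ := happrox (min ε 1) (lt_min hε one_pos) (min_le_right _ _)
    linarith [isMinOn_iff.mp hmin q' hq'K, min_le_left ε 1]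
  have heig : ∀ i, tapp p n B q.2 i = q.1 * q.2 i ^ p := fun i => by
    simpa [sub_eq_zero] using congrFun (norm_eq_zero.mp hres) i
  have hq0 : q.2 ≠ 0 := fun h => by simpa [h] using hqK.2.2
  exact hqK.1.1.trans ((le_abs_self _).trans (abs_le_tensorSpecRad hB hq0 heig))

end Spectral

def feasibleSet (p n : ℕ) (A : Fin n → (Fin p → Fin n) → ℝ) (b : Fin n → ℝ) :
    Set (Fin n → ℝ) :=
  {x | 0 ≤ x ∧ tapp p n A x ≤ b}

section MTensor

variable {p n : ℕ} {A : Fin n → (Fin p → Fin n) → ℝ} {b : Fin n → ℝ}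

lemma IsMTensor.isZTensor (hA : IsMTensor p n A) : IsZTensor p n A := by
  obtain ⟨s, B, hB, -, hdec⟩ := hA
  intro i js ⟨j, hj⟩
  rw [hdec, identT, if_neg fun h => hj (h j)]
  simpa using hB i js

lemma IsZTensor.tapp_le_of_le_of_eq (hA : IsZTensor p n A) {x y : Fin n → ℝ} (hx : 0 ≤ x)
    (hxy : x ≤ y) {i : Fin n} (hi : x i = y i) : tapp p n A y i ≤ tapp p n A x i := by
  refine sum_le_sum fun js _ => ?_
  by_cases hjs : ∀ j, js j = i
  · simp [hjs, hi]
  · exact mul_le_mul_of_nonpos_left (prod_le_prod (fun _ _ => hx _) fun _ _ => hxy _)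
      (hA i js (not_forall.mp hjs))

lemma IsMTensor.exists_pos_tapp (hp : p ≠ 0) (hA : IsMTensor p n A) {y : Fin n → ℝ}
    (hy : 0 ≤ y) (hy0 : y ≠ 0) : ∃ i, 0 < tapp p n A y i := by
  obtain ⟨s, B, hB, hs, hdec⟩ := hA
  by_contra! h
  refine hs.not_ge (le_tensorSpecRad_of_le_tapp hp hB hy hy0 fun i => ?_)
  simpa [tapp_eq_smul_pow_sub hdec] using h i

lemma IsMTensor.exists_pos_le_tapp (hp : p ≠ 0) (hA : IsMTensor p n A) :
    ∃ c > 0, ∀ y ∈ stdSimplex ℝ (Fin n), ∃ i, c ≤ tapp p n A y i := by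
  rcases isEmpty_or_nonempty (Fin n) with hn | hn
  · exact ⟨1, one_pos, fun y hy => by simpa using hy.2⟩
  set g : (Fin n → ℝ) → ℝ := fun y => univ.sup' univ_nonempty fun i => tapp p n A y i
  obtain ⟨y₀, hy₀, hmin⟩ := (isCompact_stdSimplex ℝ (Fin n)).exists_isMinOn
    ⟨_, single_mem_stdSimplex ℝ (Classical.arbitrary _)⟩ (by fun_prop : Continuous g).continuousOn
  obtain ⟨i₀, hi₀⟩ := hA.exists_pos_tapp hp hy₀.1 fun h => by simpa [h] using hy₀.2
  refine ⟨g y₀, hi₀.trans_le (le_sup' (fun i => tapp p n A y₀ i) (mem_univ i₀)), fun y hy => ?_⟩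
  obtain ⟨i, -, hi⟩ := exists_mem_eq_sup' univ_nonempty fun i => tapp p n A y i
  exact ⟨i, hi ▸ isMinOn_iff.mp hmin y hy⟩

lemma isClosed_feasibleSet : IsClosed (feasibleSet p n A b) :=
  (isClosed_le continuous_const continuous_id).inter
    (isClosed_le (continuous_tapp A) continuous_const)

lemma IsZTensor.supClosed_feasibleSet (hA : IsZTensor p n A) :
    SupClosed (feasibleSet p n A b) := by
  rintro x ⟨hx, hxb⟩ y ⟨hy, hyb⟩
  refine ⟨le_sup_of_le_left hx, fun i => ?_⟩
  rcases le_total (y i) (x i) with h | h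
  · exact (hA.tapp_le_of_le_of_eq hx le_sup_left (sup_eq_left.mpr h).symm).trans (hxb i)
  · exact (hA.tapp_le_of_le_of_eq hy le_sup_right (sup_eq_right.mpr h).symm).trans (hyb i)

lemma IsMTensor.bddAbove_feasibleSet (hp : p ≠ 0) (hA : IsMTensor p n A) :
    BddAbove (feasibleSet p n A b) := by
  obtain ⟨c, hc, hcA⟩ := hA.exists_pos_le_tapp hp
  refine ⟨fun _ => max 1 ((∑ i, |b i|) / c), fun x ⟨hx, hxb⟩ k => ?_⟩
  obtain rfl | hx0 := eq_or_ne x 0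
  · exact (le_max_left _ _).trans' zero_le_one
  set t := ∑ i, x i
  obtain ⟨j, hj⟩ := Function.ne_iff.mp hx0
  have ht : 0 < t := sum_pos' (fun i _ => hx i) ⟨j, mem_univ j, (hx j).lt_of_ne' hj⟩
  obtain ⟨i, hi⟩ := hcA _ (inv_sum_smul_mem_stdSimplex hx hx0)
  have hscale : c * t ^ p ≤ ∑ i, |b i| := by
    rw [tapp_smul, Pi.smul_apply, smul_eq_mul, inv_pow, inv_mul_eq_div, le_div_iff₀ (pow_pos ht p)]
      at hi
    exact hi.trans ((hxb i).trans ((le_abs_self _).trans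
      (single_le_sum (f := fun i => |b i|) (fun i _ => abs_nonneg _) (mem_univ i))))
  refine (single_le_sum (fun i _ => hx i) (mem_univ k)).trans ?_
  rcases le_or_gt t 1 with ht₁ | ht₁
  · exact ht₁.trans (le_max_left _ _)
  · refine le_max_of_le_right ((le_self_pow₀ ht₁.le hp).trans ?_)
    rwa [le_div_iff₀ hc, mul_comm]

lemma IsZTensor.tapp_eq_of_isGreatest (hA : IsZTensor p n A) {ξ : Fin n → ℝ}
    (hξ : IsGreatest (feasibleSet p n A b) ξ) : tapp p n A ξ = b := by
  funext i
  by_contra hne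
  set y : ℝ → Fin n → ℝ := fun δ => Function.update ξ i (ξ i + δ)
  have hi : ∀ᶠ δ in 𝓝 0, tapp p n A (y δ) i < b i := by
    refine ContinuousAt.eventually_lt (by fun_prop) continuousAt_const ?_
    simpa [y] using (hξ.1.2 i).lt_of_ne hne
  obtain ⟨δ, hδi, hδ⟩ := ((hi.filter_mono nhdsWithin_le_nhds).and self_mem_nhdsWithin).exists
    (f := 𝓝[>] 0)
  have hξy : ξ ≤ y δ := fun k => by
    rcases eq_or_ne k i with rfl | hk <;> simp [y, *, le_of_lt hδ]
  have hyF : y δ ∈ feasibleSet p n A b := by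
    refine ⟨hξ.1.1.trans hξy, fun k => ?_⟩
    rcases eq_or_ne k i with rfl | hk
    · exact hδi.le
    · exact (hA.tapp_le_of_le_of_eq hξ.1.1 hξy (by simp [y, hk])).trans (hξ.1.2 k)
  have := hξ.2 hyF i
  simp only [y, Function.update_self] at this
  exact (lt_add_of_pos_right _ hδ).not_ge this

lemma IsMTensor.exists_isGreatest_feasibleSet (hp : p ≠ 0) (hA : IsMTensor p n A)
    (hne : (feasibleSet p n A b).Nonempty) : ∃ ξ, IsGreatest (feasibleSet p n A b) ξ :=
  ⟨_, hA.isZTensor.supClosed_feasibleSet.csSup_mem_of_isClosed isClosed_feasibleSet hne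
    (hA.bddAbove_feasibleSet hp), fun _ hx => le_csSup (hA.bddAbove_feasibleSet hp) hx⟩

end MTensor

theorem stmt9_general (m n : ℕ) (hm : 2 ≤ m)
    (A At : Fin n → (Fin (m-1) → Fin n) → ℝ)
    (hAt : IsMTensor (m-1) n At)
    (hAle : ∀ i js, At i js ≤ A i js)
    (b bt : Fin n → ℝ) (hble : b ≤ bt)
    (xmax : Fin n → ℝ) (hxmax : 0 ≤ xmax ∧ tapp (m-1) n A xmax = b ∧
      ∀ y : Fin n → ℝ, 0 ≤ y → tapp (m-1) n A y = b → y ≤ xmax) :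
    ∃ xmt : Fin n → ℝ, 0 ≤ xmt ∧ tapp (m-1) n At xmt = bt ∧
      (∀ y : Fin n → ℝ, 0 ≤ y → tapp (m-1) n At y = bt → y ≤ xmt) ∧
      xmax ≤ xmt := by
  obtain ⟨hxmax₀, hxmax_eq, -⟩ := hxmax
  have hxmaxF : xmax ∈ feasibleSet (m-1) n At bt :=
    ⟨hxmax₀, (tapp_mono_left hAle hxmax₀).trans (hxmax_eq ▸ hble)⟩
  obtain ⟨ξ, hξ⟩ := hAt.exists_isGreatest_feasibleSet (by omega) ⟨_, hxmaxF⟩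
  exact ⟨ξ, hξ.1.1, hAt.isZTensor.tapp_eq_of_isGreatest hξ,
    fun y hy hyeq => hξ.2 ⟨hy, hyeq.le⟩, hξ.2 hxmaxF⟩

/-- monotone dependence of the maximal nonnegative solution: increasing
`b` and decreasing the nonsingular M-tensor `A` (staying a nonsingular M-tensor)
preserves existence of the maximal nonnegative solution and increases it. -/
theorem stmt9 (m n : ℕ) (hm : 2 ≤ m)
    (A At : Fin n → (Fin (m-1) → Fin n) → ℝ)
    (hA : IsMTensor (m-1) n A) (hAt : IsMTensor (m-1) n At)
    (hAle : ∀ i js, At i js ≤ A i js)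
    (b bt : Fin n → ℝ) (hble : b ≤ bt)
    (hne : ∃ x : Fin n → ℝ, 0 ≤ x ∧ tapp (m-1) n A x ≤ b)
    (xmax : Fin n → ℝ) (hxmax : 0 ≤ xmax ∧ tapp (m-1) n A xmax = b ∧
      ∀ y : Fin n → ℝ, 0 ≤ y → tapp (m-1) n A y = b → y ≤ xmax) :
    ∃ xmt : Fin n → ℝ, 0 ≤ xmt ∧ tapp (m-1) n At xmt = bt ∧
      (∀ y : Fin n → ℝ, 0 ≤ y → tapp (m-1) n At y = bt → y ≤ xmt) ∧
      xmax ≤ xmt :=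
  stmt9_general m n hm A At hAt hAle b bt hble xmax hxmax

end
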